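/- Approximation error of the LMM step: let E and Y be finite-dimensional real inner product spaces, F : E → Y differentiable, x ∈ E, A := F'(x), λ > 0, γ ≥ 0, v ∈ Y, and set x' := x − γ·B(A,λ)(A* v). If ‖F'(u) − F'(w)‖_op ≤ L·‖u − w‖ for all u, w on the closed segment joining x and x', then ‖F(x') − (F(x) − γ·P(A,λ)v)‖ ≤ (L·γ²/(8·λ))·‖Π_A v‖². -/

import Mathlib

/-
Since `F'` is `L`-Lipschitz on the segment, Taylor's formula bounds the error by
`L/2 ‖x' - x‖² = L γ²/2 ‖d‖²` with `d = B(A,λ)(A* v)`. Because `A*` kills `(range A)ᗮ`, the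
regularized normal equation reads `A* A d + λ d = A* (Π_A v)`; pairing it with `d` gives
`‖A d‖² + λ ‖d‖² = ⟪Π_A v, A d⟫ ≤ ‖Π_A v‖ ‖A d‖`, hence `λ ‖d‖² ≤ ‖Π_A v‖² / 4`.
-/

open scoped RealInnerProductSpace

noncomputable section

variable {E Y : Type*} [NormedAddCommGroup E] [InnerProductSpace ℝ E] [FiniteDimensional ℝ E]
  [NormedAddCommGroup Y] [InnerProductSpace ℝ Y] [FiniteDimensional ℝ Y]

/-- `B(A,λ) = (A*∘A + λ·id)⁻¹`. -/
def Bop (A : E →L[ℝ] Y) (lam : ℝ) : E →L[ℝ] E :=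
  (ContinuousLinearMap.adjoint A ∘L A + lam • ContinuousLinearMap.id ℝ E).inverse

/-- `P(A,λ) = A ∘ B(A,λ) ∘ A*`. -/
def Pop (A : E →L[ℝ] Y) (lam : ℝ) : Y →L[ℝ] Y :=
  A ∘L Bop A lam ∘L ContinuousLinearMap.adjoint A

/-- `Π_A`, the orthogonal projection of `Y` onto the range of `A`. -/
def projRange (A : E →L[ℝ] Y) : Y →L[ℝ] Y :=
  (LinearMap.range (A : E →ₗ[ℝ] Y)).subtypeL ∘L Submodule.orthogonalProjectionOnto (LinearMap.range (A : E →ₗ[ℝ] Y))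

open ContinuousLinearMap

section Taylor

variable {V W : Type*} [NormedAddCommGroup V] [NormedSpace ℝ V]
  [NormedAddCommGroup W] [NormedSpace ℝ W]

theorem norm_image_sub_sub_fderiv_le_of_lipschitz_on_segment {f : V → W} {f' : V → V →L[ℝ] W}
    {x y : V} {L : ℝ} (hf : ∀ u ∈ segment ℝ x y, HasFDerivAt f (f' u) u)
    (hL : ∀ u ∈ segment ℝ x y, ‖f' u - f' x‖ ≤ L * ‖u - x‖) :
    ‖f y - f x - f' x (y - x)‖ ≤ L / 2 * ‖y - x‖ ^ 2 := by
  set h := y - x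
  set g : ℝ → W := fun t => f (x + t • h) - f x - t • f' x h
  have hmem : ∀ t ∈ Set.Icc (0 : ℝ) 1, x + t • h ∈ segment ℝ x y := fun t ht => by
    rw [segment_eq_image']
    exact ⟨t, ht, rfl⟩
  have hg : ∀ t ∈ Set.Icc (0 : ℝ) 1, HasDerivAt g ((f' (x + t • h) - f' x) h) t := by
    intro t ht
    have hpath : HasDerivAt (fun t : ℝ => x + t • h) h t := by
      simpa using ((hasDerivAt_id t).smul_const h).const_add x
    have hlin : HasDerivAt (fun t : ℝ => t • f' x h) (f' x h) t := by
      simpa using (hasDerivAt_id t).smul_const (f' x h)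
    exact (((hf _ (hmem t ht)).comp_hasDerivAt t hpath).sub_const (f x)).sub hlin
  have hB : ∀ t, HasDerivAt (fun t => L / 2 * ‖h‖ ^ 2 * t ^ 2) (L * ‖h‖ ^ 2 * t) t := fun t => by
    refine ((hasDerivAt_pow 2 t).const_mul (L / 2 * ‖h‖ ^ 2)).congr_deriv ?_
    norm_num
    ring
  have hg' : ∀ t ∈ Set.Ico (0 : ℝ) 1, ‖(f' (x + t • h) - f' x) h‖ ≤ L * ‖h‖ ^ 2 * t := by
    intro t ht
    calc ‖(f' (x + t • h) - f' x) h‖ ≤ ‖f' (x + t • h) - f' x‖ * ‖h‖ := le_opNorm _ _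
      _ ≤ L * ‖t • h‖ * ‖h‖ := by
          gcongr
          simpa using hL _ (hmem t (Set.Ico_subset_Icc_self ht))
      _ = L * ‖h‖ ^ 2 * t := by rw [norm_smul, Real.norm_of_nonneg ht.1]; ring
  have hbound := image_norm_le_of_norm_deriv_right_le_deriv_boundary
    (fun t ht => (hg t ht).continuousAt.continuousWithinAt)
    (fun t ht => (hg t (Set.Ico_subset_Icc_self ht)).hasDerivWithinAt)
    (by simp [g]) hB hg' (Set.right_mem_Icc.mpr zero_le_one)
  simpa [g, h] using hbound

end Taylor

section RegularizedNormalOperator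

variable {V W : Type*} [NormedAddCommGroup V] [InnerProductSpace ℝ V] [CompleteSpace V]
  [NormedAddCommGroup W] [InnerProductSpace ℝ W] [CompleteSpace W]

theorem inner_adjoint_comp_add_smul_id_apply_self (A : V →L[ℝ] W) (lam : ℝ) (z : V) :
    ⟪(adjoint A ∘L A + lam • ContinuousLinearMap.id ℝ V) z, z⟫ = ‖A z‖ ^ 2 + lam * ‖z‖ ^ 2 := by
  simp only [add_apply, comp_apply, smul_apply, ContinuousLinearMap.id_apply, inner_add_left,
    adjoint_inner_left, real_inner_smul_left, real_inner_self_eq_norm_sq]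

theorem isUnit_adjoint_comp_add_smul_id (A : V →L[ℝ] W) {lam : ℝ} (hlam : 0 < lam) :
    IsUnit (adjoint A ∘L A + lam • ContinuousLinearMap.id ℝ V) := by
  refine isUnit_of_forall_le_norm_inner_map _ (c := lam.toNNReal) (Real.toNNReal_pos.mpr hlam)
    fun z => ?_
  rw [inner_adjoint_comp_add_smul_id_apply_self, Real.norm_of_nonneg (by positivity),
    Real.coe_toNNReal _ hlam.le]
  nlinarith [sq_nonneg ‖A z‖]

end RegularizedNormalOperator

theorem adjoint_comp_add_smul_id_apply_Bop (A : E →L[ℝ] Y) {lam : ℝ} (hlam : 0 < lam) (z : E) :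
    (adjoint A ∘L A + lam • ContinuousLinearMap.id ℝ E) (Bop A lam z) = z := by
  rw [Bop, ← ringInverse_eq_inverse]
  exact DFunLike.congr_fun (Ring.mul_inverse_cancel _ (isUnit_adjoint_comp_add_smul_id A hlam)) z

theorem adjoint_projRange (A : E →L[ℝ] Y) (v : Y) : adjoint A (projRange A v) = adjoint A v := by
  have hperp : v - projRange A v ∈ (LinearMap.range (A : E →ₗ[ℝ] Y))ᗮ :=
    Submodule.sub_starProjection_mem_orthogonal v
  rw [orthogonal_range, LinearMap.mem_ker] at hperp
  rw [eq_comm, ← sub_eq_zero, ← map_sub]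
  simpa using hperp

theorem projRange_eq_zero_of_Bop_adjoint_eq_zero (A : E →L[ℝ] Y) {lam : ℝ} (hlam : 0 < lam)
    {v : Y} (h : Bop A lam (adjoint A v) = 0) : projRange A v = 0 := by
  have hv : v ∈ (LinearMap.range (A : E →ₗ[ℝ] Y))ᗮ := by
    rw [orthogonal_range, LinearMap.mem_ker]
    simpa [h] using (adjoint_comp_add_smul_id_apply_Bop A hlam (adjoint A v)).symm
  simp [projRange, Submodule.orthogonalProjectionOnto_eq_zero_iff.mpr hv]

theorem mul_norm_sq_Bop_adjoint_le (A : E →L[ℝ] Y) {lam : ℝ} (hlam : 0 < lam) (v : Y) :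
    lam * ‖Bop A lam (adjoint A v)‖ ^ 2 ≤ ‖projRange A v‖ ^ 2 / 4 := by
  set d := Bop A lam (adjoint A v)
  set w := projRange A v
  have henergy : ‖A d‖ ^ 2 + lam * ‖d‖ ^ 2 = ⟪w, A d⟫ := by
    rw [← inner_adjoint_comp_add_smul_id_apply_self, adjoint_comp_add_smul_id_apply_Bop A hlam,
      ← adjoint_projRange, adjoint_inner_left]
  nlinarith [real_inner_le_norm w (A d), sq_nonneg (‖A d‖ - ‖w‖ / 2)]

/-- Approximation error of the LMM step: the mapped iterate `F(x')` is close to the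
linearized step `F(x) − γ·P(A,λ)v`. -/
theorem lmm_step_approximation_error
    (F : E → Y) (F' : E → E →L[ℝ] Y)
    (hdiff : ∀ u : E, HasFDerivAt F (F' u) u)
    (x : E) (lam γ L : ℝ) (hlam : 0 < lam) (hγ : 0 ≤ γ) (v : Y)
    (x' : E) (hx' : x' = x - γ • Bop (F' x) lam (ContinuousLinearMap.adjoint (F' x) v))
    (hLipseg : ∀ u w : E, u ∈ segment ℝ x x' → w ∈ segment ℝ x x' →
      ‖F' u - F' w‖ ≤ L * ‖u - w‖) :
    ‖F x' - (F x - γ • Pop (F' x) lam v)‖ ≤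
      L * γ ^ 2 / (8 * lam) * ‖projRange (F' x) v‖ ^ 2 := by
  set A := F' x
  set d := Bop A lam (adjoint A v)
  have hstep : x' - x = -(γ • d) := by rw [hx']; abel
  have hlin : F x' - (F x - γ • Pop A lam v) = F x' - F x - A (x' - x) := by
    rw [hstep, map_neg, map_smul, sub_neg_eq_add, sub_add]
    rfl
  have htaylor : ‖F x' - F x - A (x' - x)‖ ≤ L / 2 * ‖x' - x‖ ^ 2 :=
    norm_image_sub_sub_fderiv_le_of_lipschitz_on_segment (fun u _ => hdiff u)
      fun u hu => hLipseg u x hu (left_mem_segment ℝ x x')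
  rw [hlin]
  rcases le_or_gt 0 L with hL | hL
  · have hd := mul_norm_sq_Bop_adjoint_le A hlam v
    calc _ ≤ L / 2 * ‖x' - x‖ ^ 2 := htaylor
      _ = L / 2 * γ ^ 2 * ‖d‖ ^ 2 := by
          rw [hstep, norm_neg, norm_smul, Real.norm_of_nonneg hγ]
          ring
      _ ≤ L / 2 * γ ^ 2 * (‖projRange A v‖ ^ 2 / (4 * lam)) := by
          gcongr
          rw [le_div_iff₀ (by positivity)]
          linarith
      _ = _ := by field_simp; ring
  · -- a negative Lipschitz constant collapses the segment to a point
    have hx : x' = x := by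
      have := hLipseg x' x (right_mem_segment ℝ x x') (left_mem_segment ℝ x x')
      have : ‖x' - x‖ ≤ 0 := by nlinarith [norm_nonneg (F' x' - F' x), norm_nonneg (x' - x)]
      exact sub_eq_zero.mp (norm_le_zero_iff.mp this)
    obtain hγ0 | hd0 : γ = 0 ∨ d = 0 := smul_eq_zero.mp (by simpa [hx, eq_comm] using hstep)
    · simp [hx, hγ0]
    · simp [hx, projRange_eq_zero_of_Bop_adjoint_eq_zero A hlam hd0]
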